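/- arXiv:2006.13690 — 3 statements merged into one kernel-verified Lean document; each statement's English description precedes it below -/
import Mathlib

section
/- The image of the map from the integers to the integers modulo 16256 given by k ↦ k(k+1) mod 16256 has exactly 4096 elements. -/
/-!
Since `y(y+1) - x(x+1) = (y - x)(y + x + 1)` and the two factors sum to the odd number `2x + 1`,
in `ZMod 2^7` one factor is odd, hence a unit, so `y(y+1) = x(x+1)` forces `y = x` or
`y = -1 - x`; the same holds in the field `ZMod 127`. The values of `x(x+1)` are therefore counted
by the orbits of the involution `x ↦ -1 - x`: it has no fixed point mod `2^7` and the single fixed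
point `-1/2` mod `127`, giving `128/2 = 64` and `(127+1)/2 = 64` values, and `64 · 64 = 4096`
by the Chinese remainder theorem for `16256 = 128 · 127`.
-/

open Finset

theorem pow_dvd_or_pow_dvd_of_dvd_mul_of_not_dvd_add {R : Type*} [CommRing R] [IsBezout R]
    {p a b : R} (hp : Irreducible p) (n : ℕ) (hab : ¬p ∣ a + b) (h : p ^ n ∣ a * b) :
    p ^ n ∣ a ∨ p ^ n ∣ b := by
  by_cases ha : p ∣ a
  · have hb : ¬p ∣ b := fun hb => hab (dvd_add ha hb)
    exact .inl ((hp.coprime_pow_of_not_dvd n hb).symm.dvd_of_dvd_mul_right h)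
  · exact .inr ((hp.coprime_pow_of_not_dvd n ha).symm.dvd_of_dvd_mul_left h)

theorem card_add_card_fixed_eq_two_mul_ncard_range {α β : Type*} [Fintype α]
    [DecidableEq α] [DecidableEq β] {f : α → β} {σ : α → α} (hσ : Function.Involutive σ)
    (hf : ∀ x y, f y = f x ↔ y = x ∨ y = σ x) :
    Fintype.card α + #{x | σ x = x} = 2 * (Set.range f).ncard := by
  have hfiber_card (x : α) : #{y | f y = f x} + #{y ∈ ({y | σ y = y} : Finset α) | f y = f x} = 2 := by
    have hfiber_eq : ({y | f y = f x} : Finset α) = {x, σ x} := by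
      ext y; simp [hf]
    rw [filter_comm, hfiber_eq]
    by_cases hx : σ x = x
    · simp [hx, filter_singleton]
    · have : ({x, σ x} : Finset α).filter (fun y => σ y = y) = ∅ := by
        simp [hx, hσ x, Ne.symm hx]
      rw [this, card_pair (Ne.symm hx), card_empty]
  have hmaps : ((({x | σ x = x} : Finset α)) : Set α).MapsTo f (univ.image f) := by
    simp [Set.MapsTo]
  calc Fintype.card α + #{x | σ x = x}
      = ∑ b ∈ univ.image f, (#{y | f y = b} + #{y ∈ ({y | σ y = y} : Finset α) | f y = b}) := by
        rw [sum_add_distrib, ← card_eq_sum_card_image, ← card_eq_sum_card_fiberwise hmaps,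
          card_univ]
    _ = ∑ b ∈ univ.image f, 2 := by
        refine sum_congr rfl fun b hb => ?_
        obtain ⟨x, -, rfl⟩ := mem_image.mp hb
        exact hfiber_card x
    _ = 2 * (Set.range f).ncard := by
        rw [sum_const, smul_eq_mul, mul_comm, Set.ncard_eq_toFinset_card', Set.toFinset_range]

section MulAddOne

variable {R S : Type*} [CommRing R] [CommRing S]

theorem mul_add_one_eq_mul_add_one_iff
    (hR : ∀ x y : R, (x - y) * (x + y + 1) = 0 → x - y = 0 ∨ x + y + 1 = 0) (x y : R) :
    y * (y + 1) = x * (x + 1) ↔ y = x ∨ y = -1 - x := by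
  have hfactor : y * (y + 1) - x * (x + 1) = (y - x) * (y + x + 1) := by ring
  rw [← sub_eq_zero, hfactor]
  constructor
  · intro h
    rcases hR y x h with h | h
    · exact .inl (sub_eq_zero.mp h)
    · exact .inr (by linear_combination h)
  · rintro (rfl | rfl) <;> ring

theorem card_add_card_fixed_eq_two_mul_ncard_range_mul_add_one [Fintype R] [DecidableEq R]
    (hR : ∀ x y : R, (x - y) * (x + y + 1) = 0 → x - y = 0 ∨ x + y + 1 = 0) :
    Fintype.card R + #{x : R | 2 * x + 1 = 0} =
      2 * (Set.range fun x : R => x * (x + 1)).ncard := by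
  have hσ : Function.Involutive fun x : R => -1 - x := fun x => by ring
  rw [← card_add_card_fixed_eq_two_mul_ncard_range hσ (mul_add_one_eq_mul_add_one_iff hR)]
  congr 2
  ext x
  simp only [mem_filter, mem_univ, true_and]
  constructor <;> intro h <;> linear_combination -h

theorem ncard_range_mul_add_one_prod :
    (Set.range fun x : R × S => x * (x + 1)).ncard =
      (Set.range fun x : R => x * (x + 1)).ncard * (Set.range fun x : S => x * (x + 1)).ncard := by
  rw [← Set.ncard_prod, ← Set.range_prodMap]
  rfl

theorem RingEquiv.ncard_range_mul_add_one (e : R ≃+* S) :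
    (Set.range fun x : R => x * (x + 1)).ncard = (Set.range fun x : S => x * (x + 1)).ncard := by
  have hrange : e '' (Set.range fun x : R => x * (x + 1)) = Set.range fun x : S => x * (x + 1) := by
    rw [← Set.range_comp, ← e.surjective.range_comp]
    congr 1
    ext x
    simp
  rw [← hrange, Set.ncard_image_of_injective _ e.injective]

end MulAddOne

namespace ZMod

theorem range_intCast_mul_add_one (n : ℕ) :
    Set.range (fun k : ℤ => ((k * (k + 1) : ℤ) : ZMod n)) =
      Set.range fun x : ZMod n => x * (x + 1) := by
  rw [← intCast_surjective.range_comp]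
  congr 1
  ext k
  push_cast
  rfl

theorem two_mul_ncard_range_mul_add_one_of_prime (p : ℕ) [Fact p.Prime] (hp : p ≠ 2) :
    2 * (Set.range fun x : ZMod p => x * (x + 1)).ncard = p + 1 := by
  have h2 : (2 : ZMod p) ≠ 0 := by
    intro h
    have : p ∣ 2 := (natCast_eq_zero_iff 2 p).mp (by exact_mod_cast h)
    exact hp ((Nat.prime_dvd_prime_iff_eq Fact.out Nat.prime_two).mp this)
  have hfix : #{x : ZMod p | 2 * x + 1 = 0} = 1 := by
    rw [card_eq_one]
    refine ⟨-2⁻¹, ?_⟩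
    ext x
    simp only [mem_filter, mem_univ, true_and, mem_singleton]
    constructor
    · intro h; field_simp; linear_combination h
    · rintro rfl; field_simp; ring
  rw [← card_add_card_fixed_eq_two_mul_ncard_range_mul_add_one (fun x y h => mul_eq_zero.mp h),
    hfix, card]

theorem sub_eq_zero_or_add_add_one_eq_zero_two_pow {n : ℕ} (x y : ZMod (2 ^ n))
    (h : (x - y) * (x + y + 1) = 0) : x - y = 0 ∨ x + y + 1 = 0 := by
  obtain ⟨k, rfl⟩ := intCast_surjective x
  obtain ⟨m, rfl⟩ := intCast_surjective y
  have hodd : ¬(2 : ℤ) ∣ (k - m) + (k + m + 1) := by omega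
  have hdvd : ((2 ^ n : ℕ) : ℤ) ∣ (k - m) * (k + m + 1) := by
    rw [← intCast_zmod_eq_zero_iff_dvd]; push_cast; exact h
  rcases pow_dvd_or_pow_dvd_of_dvd_mul_of_not_dvd_add Int.prime_two.irreducible n hodd
    (by exact_mod_cast hdvd) with hd | hd
  · left
    have := (intCast_zmod_eq_zero_iff_dvd (k - m) (2 ^ n)).mpr (by exact_mod_cast hd)
    push_cast at this; exact this
  · right
    have := (intCast_zmod_eq_zero_iff_dvd (k + m + 1) (2 ^ n)).mpr (by exact_mod_cast hd)
    push_cast at this; exact this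

theorem two_mul_ncard_range_mul_add_one_two_pow (n : ℕ) (hn : n ≠ 0) :
    2 * (Set.range fun x : ZMod (2 ^ n) => x * (x + 1)).ncard = 2 ^ n := by
  have hfix : #{x : ZMod (2 ^ n) | 2 * x + 1 = 0} = 0 := by
    rw [card_eq_zero, filter_eq_empty_iff]
    intro x _ h
    obtain ⟨k, rfl⟩ := intCast_surjective x
    have : ((2 ^ n : ℕ) : ℤ) ∣ 2 * k + 1 := by
      rw [← intCast_zmod_eq_zero_iff_dvd]; push_cast; exact h
    have : (2 : ℤ) ∣ 2 * k + 1 := (dvd_pow_self 2 hn).trans (by exact_mod_cast this)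
    omega
  rw [← card_add_card_fixed_eq_two_mul_ncard_range_mul_add_one
    sub_eq_zero_or_add_add_one_eq_zero_two_pow, hfix, card, add_zero]

end ZMod

/-- The image of the map `ℤ → ZMod 16256`, `k ↦ k(k+1)`, has exactly 4096 elements. -/
theorem shimada_sphere_count :
    (Set.range fun k : ℤ => ((k * (k + 1) : ℤ) : ZMod 16256)).ncard = 4096 := by
  have : Fact (Nat.Prime 127) := ⟨by norm_num⟩
  have crt : ZMod 16256 ≃+* ZMod 128 × ZMod 127 :=
    ZMod.chineseRemainder (by norm_num : Nat.Coprime 128 127)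
  have h128 : 2 * (Set.range fun x : ZMod 128 => x * (x + 1)).ncard = 128 :=
    ZMod.two_mul_ncard_range_mul_add_one_two_pow 7 (by norm_num)
  have h127 := ZMod.two_mul_ncard_range_mul_add_one_of_prime 127 (by norm_num)
  rw [ZMod.range_intCast_mul_add_one, crt.ncard_range_mul_add_one, ncard_range_mul_add_one_prod,
    show (Set.range fun x : ZMod 128 => x * (x + 1)).ncard = 64 by omega,
    show (Set.range fun x : ZMod 127 => x * (x + 1)).ncard = 64 by omega]
end

section
/- For all integers k₀ and k₁, if k₀(k₀+1) ≡ k₁(k₁+1) (mod 56), then the unordered pair of residues modulo 224 given by ((2k₀(k₀+1) + 7(2k₀+1)) mod 224, (2k₀(k₀+1) − 7(2k₀+1)) mod 224) is equal to the unordered pair ((2k₁(k₁+1) + 7(2k₁+1)) mod 224, (2k₁(k₁+1) − 7(2k₁+1)) mod 224). -/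
/-!
Put `a = k₁ - k₀` and `b = k₀ + k₁ + 1`. Then `k₁(k₁+1) - k₀(k₀+1) = ab`, so the hypothesis is
`56 ∣ ab`, and the differences between the values `2k(k+1) ± 7(2k+1)` at `k₁` and at `k₀` are
`2a(b ± 7)` (same signs) and `2b(a ± 7)` (opposite signs). As `a + b = 2k₁ + 1` is odd, `8` divides
`a` or `b`; if `8 ∣ a`, then `b ± 7` is even and `7 ∣ ab + 7a = a(b + 7)`, so `112 ∣ a(b ± 7)` and the
pairs agree in order; symmetrically, if `8 ∣ b` they agree crosswise.
-/

lemma Int.two_pow_dvd_or_two_pow_dvd_of_odd_add {a b : ℤ} {n : ℕ} (h : 2 ^ n ∣ a * b)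
    (hab : Odd (a + b)) : 2 ^ n ∣ a ∨ 2 ^ n ∣ b := by
  have coprime_of_odd {c : ℤ} (hc : Odd c) : IsCoprime (2 ^ n) c :=
    (Int.isCoprime_two_left.mpr hc).pow_left
  rcases Int.even_or_odd a with ha | ha
  · exact .inl ((coprime_of_odd (Int.odd_add'.mp hab |>.mpr ha)).dvd_of_dvd_mul_right h)
  · exact .inr ((coprime_of_odd ha).dvd_of_dvd_mul_left h)

lemma dvd_mul_add_seven_and_mul_sub_seven {a b : ℤ} (hab : 56 ∣ a * b) (ha : 8 ∣ a)
    (hb : Odd b) : 112 ∣ a * (b + 7) ∧ 112 ∣ a * (b - 7) := by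
  have h7 : 7 ∣ a * b := dvd_trans ⟨8, rfl⟩ hab
  have key (c : ℤ) (hc : Even (b + c)) (h7c : 7 ∣ c) : 112 ∣ a * (b + c) := by
    have h16 : 16 ∣ a * (b + c) := mul_dvd_mul ha (even_iff_two_dvd.mp hc)
    have h7' : 7 ∣ a * (b + c) := by
      rw [mul_add]
      exact dvd_add h7 (dvd_mul_of_dvd_right h7c a)
    exact (Int.isCoprime_iff_gcd_eq_one.mpr rfl : IsCoprime (16 : ℤ) 7).mul_dvd h16 h7'
  refine ⟨key 7 (hb.add_odd ⟨3, rfl⟩) (dvd_refl 7), ?_⟩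
  simpa [sub_eq_add_neg] using key (-7) (hb.add_odd ⟨-4, rfl⟩) (dvd_neg.mpr (dvd_refl 7))

lemma dvd_mul_add_seven_and_mul_sub_seven_or {a b : ℤ} (hab : 56 ∣ a * b) (hodd : Odd (a + b)) :
    (112 ∣ a * (b + 7) ∧ 112 ∣ a * (b - 7)) ∨ (112 ∣ b * (a + 7) ∧ 112 ∣ b * (a - 7)) := by
  have h8 : (2 : ℤ) ^ 3 ∣ a * b := dvd_trans ⟨7, rfl⟩ hab
  rcases Int.two_pow_dvd_or_two_pow_dvd_of_odd_add h8 hodd with ha | hb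
  · have hb : Odd b := Int.odd_add'.mp hodd |>.mpr (even_iff_two_dvd.mpr (dvd_trans ⟨4, rfl⟩ ha))
    exact .inl (dvd_mul_add_seven_and_mul_sub_seven hab ha hb)
  · have ha : Odd a := Int.odd_add.mp hodd |>.mpr (even_iff_two_dvd.mpr (dvd_trans ⟨4, rfl⟩ hb))
    exact .inr (dvd_mul_add_seven_and_mul_sub_seven (mul_comm a b ▸ hab) hb ha)

lemma Sym2.mk_intCast_eq_mk_intCast_of_dvd {n : ℕ} {x₀ y₀ x₁ y₁ : ℤ}
    (h : ((n : ℤ) ∣ x₁ - x₀ ∧ (n : ℤ) ∣ y₁ - y₀) ∨ ((n : ℤ) ∣ y₁ - x₀ ∧ (n : ℤ) ∣ x₁ - y₀)) :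
    s((x₀ : ZMod n), (y₀ : ZMod n)) = s((x₁ : ZMod n), (y₁ : ZMod n)) := by
  simpa only [Sym2.eq_iff, ZMod.intCast_eq_intCast_iff_dvd_sub] using h

/-- If `k₀(k₀+1) ≡ k₁(k₁+1) (mod 56)`, then the unordered pairs of residues
`(2kᵢ(kᵢ+1) ± 7(2kᵢ+1)) mod 224` coincide. -/
theorem milnor_proj_eells_kuiper (k₀ k₁ : ℤ)
    (h : ((k₀ * (k₀ + 1) : ℤ) : ZMod 56) = ((k₁ * (k₁ + 1) : ℤ) : ZMod 56)) :
    (s(((2 * k₀ * (k₀ + 1) + 7 * (2 * k₀ + 1) : ℤ) : ZMod 224),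
       ((2 * k₀ * (k₀ + 1) - 7 * (2 * k₀ + 1) : ℤ) : ZMod 224)) : Sym2 (ZMod 224)) =
    (s(((2 * k₁ * (k₁ + 1) + 7 * (2 * k₁ + 1) : ℤ) : ZMod 224),
       ((2 * k₁ * (k₁ + 1) - 7 * (2 * k₁ + 1) : ℤ) : ZMod 224)) : Sym2 (ZMod 224)) := by
  have hab : 56 ∣ (k₁ - k₀) * (k₀ + k₁ + 1) := by
    have := (ZMod.intCast_eq_intCast_iff_dvd_sub _ _ 56).mp h
    rwa [show k₁ * (k₁ + 1) - k₀ * (k₀ + 1) = (k₁ - k₀) * (k₀ + k₁ + 1) by ring] at this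
  have hodd : Odd ((k₁ - k₀) + (k₀ + k₁ + 1)) := ⟨k₁, by ring⟩
  have dvd_of_eq_two_mul {d x : ℤ} (hd : 112 ∣ d) (hx : x = 2 * d) : ((224 : ℕ) : ℤ) ∣ x :=
    hx ▸ mul_dvd_mul_left 2 hd
  apply Sym2.mk_intCast_eq_mk_intCast_of_dvd
  rcases dvd_mul_add_seven_and_mul_sub_seven_or hab hodd with ⟨h₁, h₂⟩ | ⟨h₁, h₂⟩
  · exact .inl ⟨dvd_of_eq_two_mul h₁ (by ring), dvd_of_eq_two_mul h₂ (by ring)⟩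
  · exact .inr ⟨dvd_of_eq_two_mul h₂ (by ring), dvd_of_eq_two_mul h₁ (by ring)⟩
end

section
/- Let s and t be quaternions, let k be a natural number, and let σ be a real number with 0 < σ < 1 such that normSq(s) = σ(1−σ) (in particular s ≠ 0). Then Re( star(s) · ( (1/‖s‖) • ( s^(k+1) · t · (s^k)⁻¹ ) ) ) / √(1−σ) = √σ · Re(t), where star denotes quaternionic conjugation, ‖s‖ is the quaternionic norm, and • is scalar multiplication by a real number. -/
open scoped Quaternion

/-
The real part is a trace on `ℍ`, so conjugation `t ↦ sᵏ t s⁻ᵏ` preserves it, while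
`s̄ · s^(k+1) = ‖s‖² sᵏ`. Hence the second chart's formula for `h` equals
`‖s‖ Re t / √(1−σ)`, and `‖s‖ = √(σ(1−σ))` turns this into `√σ Re t`.
-/

namespace Quaternion

theorem re_mul_comm {R : Type*} [CommRing R] (a b : ℍ[R]) : (a * b).re = (b * a).re := by
  simp only [re_mul]
  ring

section Field

variable {R : Type*} [Field R] [LinearOrder R] [IsStrictOrderedRing R]

theorem re_mul_mul_inv {a : ℍ[R]} (ha : a ≠ 0) (t : ℍ[R]) : (a * t * a⁻¹).re = t.re := by
  rw [re_mul_comm, ← mul_assoc, inv_mul_cancel₀ ha, one_mul]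

theorem re_star_mul_pow_succ_mul_mul_inv_pow {s : ℍ[R]} (hs : s ≠ 0) (t : ℍ[R]) (k : ℕ) :
    (star s * (s ^ (k + 1) * t * (s ^ k)⁻¹)).re = normSq s * t.re := by
  have hconj :
      star s * (s ^ (k + 1) * t * (s ^ k)⁻¹) = normSq s • (s ^ k * t * (s ^ k)⁻¹) := by
    rw [pow_succ', mul_assoc s, mul_assoc s, ← mul_assoc (star s), star_mul_self,
      coe_mul_eq_smul, mul_assoc]
  rw [hconj, re_smul, re_mul_mul_inv (pow_ne_zero k hs), smul_eq_mul]

end Field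

theorem re_star_mul_smul_pow_succ_mul_mul_inv_pow {s : ℍ[ℝ]} (hs : s ≠ 0)
    (t : ℍ[ℝ]) (k : ℕ) :
    (star s * ((1 / ‖s‖) • (s ^ (k + 1) * t * (s ^ k)⁻¹))).re = ‖s‖ * t.re := by
  have hnorm : ‖s‖ ≠ 0 := norm_ne_zero_iff.mpr hs
  rw [mul_smul_comm, re_smul, re_star_mul_pow_succ_mul_mul_inv_pow hs, normSq_eq_norm_mul_self,
    smul_eq_mul]
  field_simp

end Quaternion

/-- If `normSq s = σ(1−σ)` with `0 < σ < 1`, then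
`Re(star s * ((1/‖s‖) • (s^(k+1) * t * (s^k)⁻¹))) / √(1−σ) = √σ * Re t`. -/
theorem quaternion_morse_well_defined (s t : ℍ[ℝ]) (k : ℕ) (σ : ℝ)
    (h0 : 0 < σ) (h1 : σ < 1) (hs : Quaternion.normSq s = σ * (1 - σ)) :
    (star s * ((1 / ‖s‖) • (s ^ (k + 1) * t * (s ^ k)⁻¹))).re / Real.sqrt (1 - σ) =
      Real.sqrt σ * t.re := by
  have h1' : 0 < 1 - σ := sub_pos.mpr h1
  have hs0 : s ≠ 0 := by
    rw [← Quaternion.normSq_ne_zero, hs]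
    positivity
  have hnorm : ‖s‖ = Real.sqrt σ * Real.sqrt (1 - σ) := by
    rw [← Real.sqrt_mul h0.le, ← hs, Quaternion.normSq_eq_norm_mul_self,
      Real.sqrt_mul_self (norm_nonneg s)]
  have hsqrt : Real.sqrt (1 - σ) ≠ 0 := (Real.sqrt_pos.mpr h1').ne'
  rw [Quaternion.re_star_mul_smul_pow_succ_mul_mul_inv_pow hs0, hnorm]
  field_simp
end
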